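/- Let G be a unitary operator on H = ℓ²(C_f, ℂ) and let 𝒩 ⊆ ℤ^d be finite. Suppose that for every subset 𝒜 ⊆ ℤ^d and every bounded operator B on H localized in 𝒜, the operator G† B G is localized in 𝒜 + 𝒩. Then for every subset 𝒜 ⊆ ℤ^d and every bounded operator B on H localized in 𝒜, the operator G B G† is localized in 𝒜 − 𝒩. -/

import Mathlib

open scoped Pointwise ComplexConjugate
open Classical

noncomputable section

variable (d : ℕ) (A : Type) (q : A)

/-- Finite configurations over `ℤ^d`. -/
def Cf : Type := {c : (Fin d → ℤ) → A // {i | c i ≠ q}.Finite}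

/-- Restrictions to `S` of finite configurations. -/
def Rst (S : Set (Fin d → ℤ)) : Type := {u : S → A // {i | u i ≠ q}.Finite}

variable {d A q}

def restr (S : Set (Fin d → ℤ)) (c : Cf d A q) : Rst d A q S :=
  ⟨fun i => c.1 i, c.2.preimage Subtype.val_injective.injOn⟩

def glue {S : Set (Fin d → ℤ)} (u : Rst d A q S) (v : Rst d A q Sᶜ) : Cf d A q :=
  ⟨fun i => if h : i ∈ S then u.1 ⟨i, h⟩ else v.1 ⟨i, h⟩, by
    apply Set.Finite.subset ((u.2.image Subtype.val).union (v.2.image Subtype.val))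
    intro i hi
    by_cases h : i ∈ S
    · exact Or.inl ⟨⟨i, h⟩, by simpa [h] using hi, rfl⟩
    · exact Or.inr ⟨⟨i, h⟩, by simpa [h] using hi, rfl⟩⟩

/-- The Hilbert space `ℓ²(C_f, ℂ)`. -/
abbrev Hd (d : ℕ) (A : Type) (q : A) : Type := lp (fun _ : Cf d A q => ℂ) 2

/-- Canonical basis vector. -/
def e (c : Cf d A q) : Hd d A q := lp.single 2 c 1

/-- A state: countable convex combination of an orthonormal family of pure states. -/
structure State (H : Type) [NormedAddCommGroup H] [InnerProductSpace ℂ H] where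
  ψ : ℕ → H
  p : ℕ → ℝ
  nonneg : ∀ k, 0 ≤ p k
  sum_one : HasSum p 1
  ortho : ∀ j k, p j ≠ 0 → p k ≠ 0 → (inner ℂ (ψ j) (ψ k) : ℂ) = if j = k then 1 else 0

/-- Reduction to `S` of the mixture of the family `ψ` with weights `p`. -/
def redFam (p : ℕ → ℝ) (ψ : ℕ → Hd d A q) (S : Set (Fin d → ℤ)) :
    Rst d A q S → Rst d A q S → ℂ := fun u u' =>
  ∑' k, (p k : ℂ) * ∑' v : Rst d A q Sᶜ, (ψ k) (glue u v) * conj ((ψ k) (glue u' v))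

def reduct (ρ : State (Hd d A q)) (S : Set (Fin d → ℤ)) :
    Rst d A q S → Rst d A q S → ℂ := redFam ρ.p ρ.ψ S

def redApply (G : Hd d A q →L[ℂ] Hd d A q) (ρ : State (Hd d A q)) (S : Set (Fin d → ℤ)) :
    Rst d A q S → Rst d A q S → ℂ := redFam ρ.p (fun k => G (ρ.ψ k)) S

/-- `G` is local at `𝒜` with neighbourhood `𝒩`. -/
def LocalAt (G : Hd d A q →L[ℂ] Hd d A q) (𝒜 𝒩 : Set (Fin d → ℤ)) : Prop :=
  ∀ ρ ρ' : State (Hd d A q), reduct ρ (𝒜 + 𝒩) = reduct ρ' (𝒜 + 𝒩) →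
    redApply G ρ 𝒜 = redApply G ρ' 𝒜

/-- `F` is a cellular automaton. -/
def IsCA (F : Cf d A q → Cf d A q) : Prop :=
  ∃ (N : Set (Fin d → ℤ)) (_ : N.Finite) (f : (N → A) → A),
    f (fun _ => q) = q ∧ ∀ c i, (F c).1 i = f (fun n => c.1 (i + n.1))

/-- `F` is reversible. -/
def Reversible (F : Cf d A q → Cf d A q) : Prop :=
  ∃ NI : Set (Fin d → ℤ), NI.Finite ∧ ∀ x y : Cf d A q, ∀ i : Fin d → ℤ,
    (∀ n ∈ NI, (F x).1 (i + n) = (F y).1 (i + n)) → x.1 i = y.1 i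


/-- A bounded operator `B` is localized in `S`. -/
def Localized (B : Hd d A q →L[ℂ] Hd d A q) (S : Set (Fin d → ℤ)) : Prop :=
  ∃ b : Rst d A q S → Rst d A q S → ℂ, ∀ c c' : Cf d A q,
    (inner ℂ (e c) (B (e c')) : ℂ) =
      if ∀ i ∉ S, c.1 i = c'.1 i then b (restr S c) (restr S c') else 0

/-!
Operators localized in disjoint regions commute; conversely, an operator commuting with every
`1_S ⊗ |v⟩⟨v'|` (for configurations `v, v'` on `Sᶜ`) is localized in `S`. Take `S = 𝒜 - 𝒩`:
such an operator `M` is localized in `Sᶜ`, so `G† M G` is localized in `Sᶜ + 𝒩`, which is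
disjoint from `𝒜`. Hence `G† M G` commutes with `B`, and conjugating by `G` (with `G G† = 1`)
shows that `G B G†` commutes with `M`.
-/

open scoped ENNReal

section IndicatorComp

variable {α β E : Type*} [NormedAddCommGroup E] {s : Set α} {σ : α → β} {x : β → E} {r : ℝ}

lemma norm_indicator_comp_rpow (hr : 0 < r) (a : α) :
    ‖s.indicator (x ∘ σ) a‖ ^ r = s.indicator (fun a => ‖x (σ a)‖ ^ r) a := by
  by_cases ha : a ∈ s <;> simp [ha, hr.ne']

lemma Summable.indicator_comp_norm_rpow (hx : Summable fun b => ‖x b‖ ^ r) (hr : 0 < r)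
    (hσ : s.InjOn σ) : Summable fun a => ‖s.indicator (x ∘ σ) a‖ ^ r := by
  simp_rw [norm_indicator_comp_rpow hr]
  exact summable_subtype_iff_indicator.mp (hx.comp_injective hσ.injective)

lemma tsum_indicator_comp_norm_rpow_le (hx : Summable fun b => ‖x b‖ ^ r) (hr : 0 < r)
    (hσ : s.InjOn σ) : ∑' a, ‖s.indicator (x ∘ σ) a‖ ^ r ≤ ∑' b, ‖x b‖ ^ r := by
  simp_rw [norm_indicator_comp_rpow hr, ← tsum_subtype]
  exact (hx.comp_injective hσ.injective).tsum_le_tsum_of_inj _ hσ.injective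
    (fun _ _ => by positivity) (fun _ => le_rfl) hx

variable {p : ℝ≥0∞}

lemma Memℓp.indicator_comp (hx : Memℓp x p) (hp : 0 < p.toReal) (hσ : s.InjOn σ) :
    Memℓp (s.indicator (x ∘ σ)) p :=
  memℓp_gen ((hx.summable hp).indicator_comp_norm_rpow hp hσ)

variable (𝕜 : Type*) [NormedField 𝕜] [NormedSpace 𝕜 E] [Fact (1 ≤ p)]

def lp.indicatorCompL (hp : p ≠ ∞) (s : Set α) (σ : α → β) (hσ : s.InjOn σ) :
    lp (fun _ : β => E) p →L[𝕜] lp (fun _ : α => E) p :=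
  have hp' : 0 < p.toReal := ENNReal.toReal_pos (zero_lt_one.trans_le Fact.out).ne' hp
  LinearMap.mkContinuous
    { toFun := fun x => ⟨s.indicator (x ∘ σ), (lp.memℓp x).indicator_comp hp' hσ⟩
      map_add' := fun x y => lp.ext (Set.indicator_add' s _ _)
      map_smul' := fun c x => lp.ext (Set.indicator_const_smul s c _) }
    1 fun x => by
      rw [one_mul]
      refine lp.norm_le_of_tsum_le hp' (norm_nonneg x) ?_
      rw [lp.norm_rpow_eq_tsum hp']
      exact tsum_indicator_comp_norm_rpow_le ((lp.memℓp x).summable hp') hp' hσ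

lemma lp.indicatorCompL_apply (hp : p ≠ ∞) (hσ : s.InjOn σ) (x : lp (fun _ : β => E) p)
    (a : α) : lp.indicatorCompL 𝕜 hp s σ hσ x a = s.indicator (x ∘ σ) a :=
  rfl

end IndicatorComp

section Configurations

variable {d : ℕ} {A : Type} {q : A} {S : Set (Fin d → ℤ)}

@[ext]
lemma Cf.ext {c c' : Cf d A q} (h : ∀ i, c.1 i = c'.1 i) : c = c' :=
  Subtype.ext (funext h)

@[ext]
lemma Rst.ext {u u' : Rst d A q S} (h : ∀ i, u.1 i = u'.1 i) : u = u' :=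
  Subtype.ext (funext h)

def Cf.quiescent : Cf d A q :=
  ⟨fun _ => q, by simp⟩

lemma glue_apply_of_mem (u : Rst d A q S) (v : Rst d A q Sᶜ) {i : Fin d → ℤ} (h : i ∈ S) :
    (glue u v).1 i = u.1 ⟨i, h⟩ :=
  dif_pos h

lemma glue_apply_of_notMem (u : Rst d A q S) (v : Rst d A q Sᶜ) {i : Fin d → ℤ} (h : i ∉ S) :
    (glue u v).1 i = v.1 ⟨i, h⟩ :=
  dif_neg h

@[simp]
lemma restr_glue (u : Rst d A q S) (v : Rst d A q Sᶜ) : restr S (glue u v) = u :=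
  Rst.ext fun i => glue_apply_of_mem u v i.2

@[simp]
lemma restr_compl_glue (u : Rst d A q S) (v : Rst d A q Sᶜ) : restr Sᶜ (glue u v) = v :=
  Rst.ext fun i => glue_apply_of_notMem u v i.2

@[simp]
lemma glue_restr (S : Set (Fin d → ℤ)) (c : Cf d A q) : glue (restr S c) (restr Sᶜ c) = c := by
  ext i
  by_cases h : i ∈ S
  · exact glue_apply_of_mem _ _ h
  · exact glue_apply_of_notMem _ _ h

lemma exists_glue_eq (S : Set (Fin d → ℤ)) (c : Cf d A q) :
    ∃ (u : Rst d A q S) (v : Rst d A q Sᶜ), glue u v = c :=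
  ⟨_, _, glue_restr S c⟩

lemma glue_eq_iff (u : Rst d A q S) (v : Rst d A q Sᶜ) (c : Cf d A q) :
    glue u v = c ↔ restr S c = u ∧ restr Sᶜ c = v := by
  constructor
  · rintro rfl
    simp
  · rintro ⟨rfl, rfl⟩
    exact glue_restr S c

lemma glue_inj {u u' : Rst d A q S} {v v' : Rst d A q Sᶜ} :
    glue u v = glue u' v' ↔ u = u' ∧ v = v' := by
  rw [glue_eq_iff, restr_glue, restr_compl_glue, eq_comm (a := u'), eq_comm (a := v')]

lemma restr_eq_restr_iff (c c' : Cf d A q) :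
    restr S c = restr S c' ↔ ∀ i ∈ S, c.1 i = c'.1 i :=
  ⟨fun h i hi => congrArg (fun u : Rst d A q S => u.1 ⟨i, hi⟩) h,
    fun h => Rst.ext fun i => h i i.2⟩

lemma agree_outside_iff (c c' : Cf d A q) :
    (∀ i ∉ S, c.1 i = c'.1 i) ↔ restr Sᶜ c = restr Sᶜ c' := by
  simp only [restr_eq_restr_iff, Set.mem_compl_iff]

lemma agree_outside_compl_iff (c c' : Cf d A q) :
    (∀ i ∉ Sᶜ, c.1 i = c'.1 i) ↔ restr S c = restr S c' := by
  simp only [restr_eq_restr_iff, Set.mem_compl_iff, not_not]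

end Configurations

section BasisVectors

variable {d : ℕ} {A : Type} {q : A}

lemma e_apply (c z : Cf d A q) : e (q := q) c z = if z = c then 1 else 0 := by
  simp [e, lp.single_apply, Pi.single_apply]

lemma inner_e_left (c : Cf d A q) (x : Hd d A q) : inner ℂ (e c) x = x c := by
  simp [e, lp.inner_single_left]

lemma ext_of_apply_e {T U : Hd d A q →L[ℂ] Hd d A q} (h : ∀ c, T (e c) = U (e c)) :
    T = U :=
  lp.ext_continuousLinearMap (by norm_num) fun c => ContinuousLinearMap.ext_ring (h c)

lemma mul_apply_e (B C : Hd d A q →L[ℂ] Hd d A q) (c c' : Cf d A q) :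
    ((B * C) (e c')) c = ∑' c'', (C (e c')) c'' * (B (e c'')) c := by
  have hsingle (c'' : Cf d A q) (a : ℂ) : lp.single 2 c'' a = a • e (q := q) c'' := by
    rw [e, ← lp.single_smul, smul_eq_mul, mul_one]
  have hsum := (lp.hasSum_single (by norm_num) (C (e c'))).mapL ((innerSL ℂ (e c)).comp B)
  simp only [hsingle, ContinuousLinearMap.comp_apply, map_smul, innerSL_apply_apply,
    inner_e_left, smul_eq_mul] at hsum
  exact hsum.tsum_eq.symm

end BasisVectors

section Localized

variable {d : ℕ} {A : Type} {q : A}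

lemma Localized.apply_e {B : Hd d A q →L[ℂ] Hd d A q} {S : Set (Fin d → ℤ)}
    (hB : Localized B S) : ∃ b : Rst d A q S → Rst d A q S → ℂ, ∀ c c' : Cf d A q,
      (B (e c')) c = if ∀ i ∉ S, c.1 i = c'.1 i then b (restr S c) (restr S c') else 0 := by
  obtain ⟨b, hb⟩ := hB
  exact ⟨b, fun c c' => by rw [← inner_e_left, hb]⟩

/-- Only the configuration agreeing with `c'` on `S₁` and with `c` off `S₁` contributes to the
matrix product, which makes the entries of `B * C` symmetric in the two factors. -/
lemma mul_apply_e_of_disjoint {S₁ S₂ : Set (Fin d → ℤ)} (hS : Disjoint S₁ S₂)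
    {B C : Hd d A q →L[ℂ] Hd d A q} {b₁ : Rst d A q S₁ → Rst d A q S₁ → ℂ}
    {b₂ : Rst d A q S₂ → Rst d A q S₂ → ℂ}
    (hb₁ : ∀ c c' : Cf d A q, (B (e c')) c =
      if ∀ i ∉ S₁, c.1 i = c'.1 i then b₁ (restr S₁ c) (restr S₁ c') else 0)
    (hb₂ : ∀ c c' : Cf d A q, (C (e c')) c =
      if ∀ i ∉ S₂, c.1 i = c'.1 i then b₂ (restr S₂ c) (restr S₂ c') else 0)
    (c c' : Cf d A q) :
    ((B * C) (e c')) c = if ∀ i ∉ S₁ ∪ S₂, c.1 i = c'.1 i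
      then b₁ (restr S₁ c) (restr S₁ c') * b₂ (restr S₂ c) (restr S₂ c') else 0 := by
  set c₀ : Cf d A q := glue (restr S₁ c') (restr S₁ᶜ c)
  have hc₀_mem {i} (hi : i ∈ S₁) : c₀.1 i = c'.1 i := glue_apply_of_mem _ _ hi
  have hc₀_notMem {i} (hi : i ∉ S₁) : c₀.1 i = c.1 i := glue_apply_of_notMem _ _ hi
  have hc₀_S₂ : restr S₂ c₀ = restr S₂ c :=
    (restr_eq_restr_iff _ _).2 fun i hi => hc₀_notMem (hS.notMem_of_mem_right hi)
  have hc₀_off : (∀ i ∉ S₂, c₀.1 i = c'.1 i) ↔ ∀ i ∉ S₁ ∪ S₂, c.1 i = c'.1 i := by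
    refine ⟨fun h i hi => ?_, fun h i hi => ?_⟩
    · simp only [Set.mem_union, not_or] at hi
      rw [← hc₀_notMem hi.1, h i hi.2]
    · by_cases hi₁ : i ∈ S₁
      · exact hc₀_mem hi₁
      · rw [hc₀_notMem hi₁, h i (by simp [hi₁, hi])]
  rw [mul_apply_e, tsum_eq_single c₀]
  · rw [hb₁, hb₂, if_pos fun i hi => (hc₀_notMem hi).symm, restr_glue, hc₀_S₂]
    simp only [hc₀_off]
    split_ifs <;> ring
  · intro c'' hc''
    rw [hb₁, hb₂]
    split_ifs with h₂ h₁
    · refine absurd (Cf.ext fun i => ?_) hc''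
      by_cases hi : i ∈ S₁
      · rw [hc₀_mem hi, h₂ i (hS.notMem_of_mem_left hi)]
      · rw [hc₀_notMem hi, h₁ i hi]
    all_goals simp

lemma Localized.commute {S₁ S₂ : Set (Fin d → ℤ)} {B C : Hd d A q →L[ℂ] Hd d A q}
    (hB : Localized B S₁) (hC : Localized C S₂) (hS : Disjoint S₁ S₂) : Commute B C := by
  obtain ⟨b₁, hb₁⟩ := hB.apply_e
  obtain ⟨b₂, hb₂⟩ := hC.apply_e
  refine ext_of_apply_e fun c' => lp.ext (funext fun c => ?_)
  rw [mul_apply_e_of_disjoint hS hb₁ hb₂, mul_apply_e_of_disjoint hS.symm hb₂ hb₁,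
    Set.union_comm, mul_comm]

end Localized

section OuterMatrixUnit

variable {d : ℕ} {A : Type} {q : A} (S : Set (Fin d → ℤ)) (v v' : Rst d A q Sᶜ)

lemma injOn_glue_restr :
    Set.InjOn (fun c : Cf d A q => glue (restr S c) v') {c | restr Sᶜ c = v} := by
  intro c₁ h₁ c₂ h₂ h
  have hcompl : restr Sᶜ c₁ = restr Sᶜ c₂ := h₁.trans h₂.symm
  rw [← glue_restr S c₁, (glue_inj.1 h).1, hcompl, glue_restr]

/-- The operator `1_S ⊗ |v⟩⟨v'|`. -/
def outerMatrixUnit : Hd d A q →L[ℂ] Hd d A q :=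
  lp.indicatorCompL ℂ (by norm_num) _ _ (injOn_glue_restr S v v')

variable {S v v'}

lemma outerMatrixUnit_apply_glue (x : Hd d A q) (u : Rst d A q S) (w : Rst d A q Sᶜ) :
    outerMatrixUnit S v v' x (glue u w) = if w = v then x (glue u v') else 0 := by
  simp [outerMatrixUnit, lp.indicatorCompL_apply, Set.indicator_apply]

lemma outerMatrixUnit_e_glue (u : Rst d A q S) (w : Rst d A q Sᶜ) :
    outerMatrixUnit S v v' (e (glue u w)) = if w = v' then e (glue u v) else 0 := by
  ext1
  funext c
  obtain ⟨a, b, rfl⟩ := exists_glue_eq S c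
  rw [outerMatrixUnit_apply_glue]
  split_ifs <;> simp_all [e_apply, glue_inj, eq_comm]

lemma localized_outerMatrixUnit : Localized (outerMatrixUnit S v v') Sᶜ := by
  refine ⟨fun w w' => if w = v ∧ w' = v' then 1 else 0, fun c c' => ?_⟩
  obtain ⟨a, b, rfl⟩ := exists_glue_eq S c
  obtain ⟨a', b', rfl⟩ := exists_glue_eq S c'
  rw [inner_e_left, agree_outside_compl_iff, outerMatrixUnit_e_glue]
  simp only [restr_glue, restr_compl_glue]
  split_ifs <;> simp_all [e_apply, glue_inj, eq_comm]

end OuterMatrixUnit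

section CommutantCriterion

variable {d : ℕ} {A : Type} {q : A} {S : Set (Fin d → ℤ)} {C : Hd d A q →L[ℂ] Hd d A q}

lemma localized_of_apply_e_glue
    (hoff : ∀ (u u' : Rst d A q S) (w w' : Rst d A q Sᶜ), w ≠ w' →
      C (e (glue u' w')) (glue u w) = 0)
    (hdiag : ∀ (u u' : Rst d A q S) (w w' : Rst d A q Sᶜ),
      C (e (glue u' w)) (glue u w) = C (e (glue u' w')) (glue u w')) :
    Localized C S := by
  let w₀ : Rst d A q Sᶜ := restr Sᶜ Cf.quiescent
  refine ⟨fun u u' => C (e (glue u' w₀)) (glue u w₀), fun c c' => ?_⟩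
  obtain ⟨a, b, rfl⟩ := exists_glue_eq S c
  obtain ⟨a', b', rfl⟩ := exists_glue_eq S c'
  rw [inner_e_left, agree_outside_iff, restr_compl_glue, restr_compl_glue, restr_glue, restr_glue]
  split_ifs with hb
  · rw [hb, hdiag]
  · exact hoff a a' b b' hb

lemma localized_of_commute (hC : ∀ v v' : Rst d A q Sᶜ, Commute C (outerMatrixUnit S v v')) :
    Localized C S := by
  have key (u u' : Rst d A q S) (w w' v v' : Rst d A q Sᶜ) :
      (if w' = v' then C (e (glue u' v)) (glue u w) else 0) =
        if w = v then C (e (glue u' w')) (glue u v') else 0 := by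
    have h := congrArg (fun T : Hd d A q →L[ℂ] Hd d A q => T (e (glue u' w')) (glue u w))
      (hC v v').eq
    simp only [mul_apply_eq_comp, outerMatrixUnit_e_glue,
      outerMatrixUnit_apply_glue] at h
    split_ifs at h ⊢ <;> simp_all
  refine localized_of_apply_e_glue (fun u u' w w' hw => ?_) (fun u u' w w' => ?_)
  · simpa [hw.symm] using (key u u' w w' w w).symm
  · simpa using key u u' w w' w w'

end CommutantCriterion

lemma Commute.conj_of_mul_eq_one {M : Type*} [Monoid M] {g g' b m : M} (hg : g * g' = 1)
    (h : Commute b (g' * (m * g))) : Commute (g * (b * g')) m :=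
  calc g * (b * g') * m = g * (b * (g' * (m * g))) * g' := by simp only [mul_assoc, hg, mul_one]
    _ = g * (g' * (m * g) * b) * g' := by rw [h.eq]
    _ = m * (g * (b * g')) := by simp only [← mul_assoc, hg, one_mul]

lemma Set.disjoint_compl_sub_add {G : Type*} [AddGroup G] (s t : Set G) :
    Disjoint s ((s - t)ᶜ + t) := by
  rw [Set.disjoint_left]
  rintro _ ha ⟨y, hy, n, hn, rfl⟩
  exact hy ⟨y + n, ha, n, hn, add_sub_cancel_right y n⟩

theorem unitary_conj_localized_of_adjoint_conj_localized_general
    {d : ℕ} {A : Type} {q : A}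
    (G : Hd d A q →L[ℂ] Hd d A q)
    (hGunit₂ : G.comp (ContinuousLinearMap.adjoint G) = ContinuousLinearMap.id ℂ (Hd d A q))
    (𝒩 : Set (Fin d → ℤ))
    (h : ∀ (𝒜 : Set (Fin d → ℤ)) (B : Hd d A q →L[ℂ] Hd d A q), Localized B 𝒜 →
      Localized ((ContinuousLinearMap.adjoint G).comp (B.comp G)) (𝒜 + 𝒩)) :
    ∀ (𝒜 : Set (Fin d → ℤ)) (B : Hd d A q →L[ℂ] Hd d A q), Localized B 𝒜 →
      Localized (G.comp (B.comp (ContinuousLinearMap.adjoint G))) (𝒜 - 𝒩) := by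
  intro 𝒜 B hB
  refine localized_of_commute fun v v' => Commute.conj_of_mul_eq_one hGunit₂ ?_
  exact hB.commute (h _ _ localized_outerMatrixUnit) (Set.disjoint_compl_sub_add 𝒜 𝒩)

/-- for a unitary `G`, if `G† B G` is localized in `𝒜 + 𝒩` whenever `B` is
localized in `𝒜`, then `G B G†` is localized in `𝒜 - 𝒩` whenever `B` is localized in `𝒜`. -/
theorem unitary_conj_localized_of_adjoint_conj_localized
    {d : ℕ} (hd : 0 < d) {A : Type} [Fintype A] {q : A}
    (G : Hd d A q →L[ℂ] Hd d A q)
    (hGunit₁ : (ContinuousLinearMap.adjoint G).comp G = ContinuousLinearMap.id ℂ (Hd d A q))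
    (hGunit₂ : G.comp (ContinuousLinearMap.adjoint G) = ContinuousLinearMap.id ℂ (Hd d A q))
    (𝒩 : Set (Fin d → ℤ)) (h𝒩 : 𝒩.Finite)
    (h : ∀ (𝒜 : Set (Fin d → ℤ)) (B : Hd d A q →L[ℂ] Hd d A q), Localized B 𝒜 →
      Localized ((ContinuousLinearMap.adjoint G).comp (B.comp G)) (𝒜 + 𝒩)) :
    ∀ (𝒜 : Set (Fin d → ℤ)) (B : Hd d A q →L[ℂ] Hd d A q), Localized B 𝒜 →
      Localized (G.comp (B.comp (ContinuousLinearMap.adjoint G))) (𝒜 - 𝒩) :=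
  unitary_conj_localized_of_adjoint_conj_localized_general G hGunit₂ 𝒩 h

end
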